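/- arXiv:2409.04669 — 6 statements merged into one kernel-verified Lean document; each statement's English description precedes it below -/
import Mathlib

section
/- Every two-sided matching market with strict preferences admits at least one stable match: there exists a match μ such that no proposer–acceptor pair (P_i, A_j) satisfies both O_{P_i}(A_j) > O_{P_i}(μ_{P_i}) and O_{A_j}(P_i) > O_{A_j}(μ_{A_j}). -/
/-- A two-sided matching market with proposers `P` and acceptors `A`.
`OP i` is proposer `i`'s preference function over `A ∪ {∅}` (where `none` is `∅`),
and `OA j` is acceptor `j`'s preference function over `P ∪ {∅}`. -/
structure Market (P A : Type) [Fintype P] [Fintype A] where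
  OP : P → Option A → ℝ
  OA : A → Option P → ℝ
  OP_inj : ∀ i, Function.Injective (OP i)
  OA_inj : ∀ j, Function.Injective (OA j)
  OP_none : ∀ i, OP i none = 0
  OA_none : ∀ j, OA j none = 0
  OP_pos : ∀ i j, 0 < OP i (some j)
  OA_pos : ∀ j i, 0 < OA j (some i)
  OP_le_one : ∀ i o, OP i o ≤ 1
  OA_le_one : ∀ j o, OA j o ≤ 1

/-- A match: each proposer gets a partner in `A ∪ {∅}`, each acceptor a partner
in `P ∪ {∅}`, consistently. -/
structure Matching (P A : Type) where
  μP : P → Option A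
  μA : A → Option P
  consistent : ∀ i j, μP i = some j ↔ μA j = some i

/-- A match is stable if there is no proposer–acceptor pair who strictly prefer
each other to their assigned partners. -/
def Stable {P A : Type} [Fintype P] [Fintype A] (M : Market P A) (μ : Matching P A) : Prop :=
  ¬ ∃ (i : P) (j : A), M.OP i (some j) > M.OP i (μ.μP i) ∧ M.OA j (some i) > M.OA j (μ.μA j)

namespace StableAux

open Classical

variable {P A : Type} [Fintype P] [Fintype A] (M : Market P A)

/-- Candidate partners for proposer `i`, given acceptor tentative partners `w`. -/
noncomputable def candP (w : A → Option P) (i : P) : Finset (Option A) :=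
  Finset.univ.filter (fun o => ∀ j, o = some j → M.OA j (w j) ≤ M.OA j (some i))

/-- Candidate partners for acceptor `j`, given proposer tentative partners `v`. -/
noncomputable def candA (v : P → Option A) (j : A) : Finset (Option P) :=
  Finset.univ.filter (fun o => ∀ i, o = some i → M.OP i (v i) ≤ M.OP i (some j))

lemma candP_nonempty (w : A → Option P) (i : P) : (candP M w i).Nonempty :=
  ⟨none, by simp [candP]⟩

lemma candA_nonempty (v : P → Option A) (j : A) : (candA M v j).Nonempty :=
  ⟨none, by simp [candA]⟩

noncomputable def vNext (w : A → Option P) (i : P) : Option A :=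
  Classical.choose (Finset.exists_max_image (candP M w i) (M.OP i) (candP_nonempty M w i))

lemma vNext_mem (w : A → Option P) (i : P) : vNext M w i ∈ candP M w i :=
  (Classical.choose_spec
    (Finset.exists_max_image (candP M w i) (M.OP i) (candP_nonempty M w i))).1

lemma vNext_max (w : A → Option P) (i : P) :
    ∀ o ∈ candP M w i, M.OP i o ≤ M.OP i (vNext M w i) :=
  (Classical.choose_spec
    (Finset.exists_max_image (candP M w i) (M.OP i) (candP_nonempty M w i))).2

noncomputable def wNext (v : P → Option A) (j : A) : Option P :=
  Classical.choose (Finset.exists_max_image (candA M v j) (M.OA j) (candA_nonempty M v j))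

lemma wNext_mem (v : P → Option A) (j : A) : wNext M v j ∈ candA M v j :=
  (Classical.choose_spec
    (Finset.exists_max_image (candA M v j) (M.OA j) (candA_nonempty M v j))).1

lemma wNext_max (v : P → Option A) (j : A) :
    ∀ o ∈ candA M v j, M.OA j o ≤ M.OA j (wNext M v j) :=
  (Classical.choose_spec
    (Finset.exists_max_image (candA M v j) (M.OA j) (candA_nonempty M v j))).2

/-- States of the Adachi fixed-point iteration. -/
abbrev State (P A : Type) := (P → Option A) × (A → Option P)

/-- The monotone Adachi operator. -/
noncomputable def T (s : State P A) : State P A :=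
  (vNext M s.2, wNext M s.1)

/-- The order: proposers get (weakly) better, acceptors get (weakly) worse. -/
def SLE (s t : State P A) : Prop :=
  (∀ i, M.OP i (s.1 i) ≤ M.OP i (t.1 i)) ∧ (∀ j, M.OA j (t.2 j) ≤ M.OA j (s.2 j))

lemma SLE_refl (s : State P A) : SLE M s s := ⟨fun _ => le_refl _, fun _ => le_refl _⟩

lemma SLE_trans {s t u : State P A} (h1 : SLE M s t) (h2 : SLE M t u) : SLE M s u :=
  ⟨fun i => (h1.1 i).trans (h2.1 i), fun j => (h2.2 j).trans (h1.2 j)⟩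

lemma SLE_antisymm {s t : State P A} (h1 : SLE M s t) (h2 : SLE M t s) : s = t := by
  have hv : s.1 = t.1 := funext fun i => M.OP_inj i (le_antisymm (h1.1 i) (h2.1 i))
  have hw : s.2 = t.2 := funext fun j => M.OA_inj j (le_antisymm (h2.2 j) (h1.2 j))
  exact Prod.ext hv hw

lemma candP_mono {w w' : A → Option P} (h : ∀ j, M.OA j (w' j) ≤ M.OA j (w j)) (i : P) :
    candP M w i ⊆ candP M w' i := by
  intro o ho
  simp only [candP, Finset.mem_filter, Finset.mem_univ, true_and] at ho ⊢
  exact fun j hj => (h j).trans (ho j hj)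

lemma candA_anti {v v' : P → Option A} (h : ∀ i, M.OP i (v i) ≤ M.OP i (v' i)) (j : A) :
    candA M v' j ⊆ candA M v j := by
  intro o ho
  simp only [candA, Finset.mem_filter, Finset.mem_univ, true_and] at ho ⊢
  exact fun i hi => (h i).trans (ho i hi)

lemma T_mono {s t : State P A} (h : SLE M s t) : SLE M (T M s) (T M t) := by
  constructor
  · intro i
    exact vNext_max M t.2 i _ (candP_mono M h.2 i (vNext_mem M s.2 i))
  · intro j
    exact wNext_max M s.1 j _ (candA_anti M h.1 j (wNext_mem M t.1 j))

/-- The bottom state. -/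
noncomputable def bot : State P A := (fun _ => none, wNext M (fun _ => none))

lemma OP_nonneg (i : P) (o : Option A) : 0 ≤ M.OP i o := by
  cases o with
  | none => simp [M.OP_none]
  | some j => exact (M.OP_pos i j).le

lemma bot_le_T_bot : SLE M (bot M) (T M (bot M)) := by
  constructor
  · intro i
    simp only [bot, M.OP_none]
    exact OP_nonneg M i _
  · intro j
    exact le_refl _

lemma chain_mono : ∀ k : ℕ, SLE M ((T M)^[k] (bot M)) ((T M)^[k+1] (bot M)) := by
  intro k
  induction k with
  | zero => exact bot_le_T_bot M
  | succ n ih =>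
      rw [Function.iterate_succ_apply', Function.iterate_succ_apply']
      exact T_mono M ih

lemma chain_mono' : ∀ k l : ℕ, k ≤ l → SLE M ((T M)^[k] (bot M)) ((T M)^[l] (bot M)) := by
  intro k l h
  induction l with
  | zero => cases Nat.le_zero.mp h; exact SLE_refl M _
  | succ n ih =>
      rcases Nat.lt_or_ge k (n+1) with h' | h'
      · exact SLE_trans M (ih (Nat.lt_succ_iff.mp h')) (chain_mono M n)
      · have : k = n + 1 := le_antisymm h h'
        subst this; exact SLE_refl M _

lemma exists_fixed : ∃ s : State P A, T M s = s := by
  classical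
  haveI : DecidableEq P := Classical.decEq P
  haveI : DecidableEq A := Classical.decEq A
  by_contra hno
  push_neg at hno
  set N := Fintype.card (State P A) with hN
  have hneq : ∀ k : ℕ, (T M)^[k+1] (bot M) ≠ (T M)^[k] (bot M) := by
    intro k
    rw [Function.iterate_succ_apply']
    exact hno _
  have hinj : Function.Injective (fun k : Fin (N+1) => (T M)^[(k : ℕ)] (bot M)) := by
    intro k l hkl
    simp only at hkl
    by_contra hne
    rcases Ne.lt_or_gt (fun h => hne (Fin.ext h) : (k:ℕ) ≠ (l:ℕ)) with h | h
    · have h1 := chain_mono' M ((k:ℕ)+1) (l:ℕ) h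
      rw [← hkl] at h1
      have h2 := chain_mono M (k:ℕ)
      exact hneq (k:ℕ) (SLE_antisymm M h1 h2)
    · have h1 := chain_mono' M ((l:ℕ)+1) (k:ℕ) h
      rw [hkl] at h1
      have h2 := chain_mono M (l:ℕ)
      exact hneq (l:ℕ) (SLE_antisymm M h1 h2)
  have := Fintype.card_le_of_injective _ hinj
  rw [Fintype.card_fin, ← hN] at this
  exact Nat.not_succ_le_self N this

end StableAux

open StableAux in
/-- Every two-sided matching market with strict preferences admits a stable match. -/
theorem exists_stable_match (P A : Type) [Fintype P] [Fintype A]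
    [Nonempty P] [Nonempty A] (M : Market P A) :
    ∃ μ : Matching P A, Stable M μ := by
  classical
  obtain ⟨s, hs⟩ := exists_fixed M
  obtain ⟨v, w⟩ := s
  have hv : vNext M w = v := congrArg Prod.fst hs
  have hw : wNext M v = w := congrArg Prod.snd hs
  -- key facts at the fixed point
  have hvmem : ∀ i, v i ∈ candP M w i := fun i => hv ▸ vNext_mem M w i
  have hvmax : ∀ i, ∀ o ∈ candP M w i, M.OP i o ≤ M.OP i (v i) := fun i o ho => by
    rw [← hv]; exact vNext_max M w i o ho
  have hwmem : ∀ j, w j ∈ candA M v j := fun j => hw ▸ wNext_mem M v j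
  have hwmax : ∀ j, ∀ o ∈ candA M v j, M.OA j o ≤ M.OA j (w j) := fun j o ho => by
    rw [← hw]; exact wNext_max M v j o ho
  have consistent : ∀ i j, v i = some j ↔ w j = some i := by
    intro i j
    constructor
    · intro hij
      have h1 : M.OA j (w j) ≤ M.OA j (some i) := by
        have := hvmem i
        simp only [candP, Finset.mem_filter, Finset.mem_univ, true_and] at this
        exact this j hij
      have h2 : M.OA j (some i) ≤ M.OA j (w j) := by
        apply hwmax j
        simp only [candA, Finset.mem_filter, Finset.mem_univ, true_and]
        intro i' hi'
        cases Option.some.inj hi'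
        rw [hij]
      exact M.OA_inj j (le_antisymm h1 h2)
    · intro hji
      have h1 : M.OP i (v i) ≤ M.OP i (some j) := by
        have := hwmem j
        simp only [candA, Finset.mem_filter, Finset.mem_univ, true_and] at this
        exact this i hji
      have h2 : M.OP i (some j) ≤ M.OP i (v i) := by
        apply hvmax i
        simp only [candP, Finset.mem_filter, Finset.mem_univ, true_and]
        intro j' hj'
        cases Option.some.inj hj'
        rw [hji]
      exact M.OP_inj i (le_antisymm h1 h2)
  refine ⟨⟨v, w, consistent⟩, ?_⟩
  rintro ⟨i, j, hPi, hAj⟩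
  simp only at hPi hAj
  have hmem : some j ∈ candP M w i := by
    simp only [candP, Finset.mem_filter, Finset.mem_univ, true_and]
    intro j' hj'
    cases Option.some.inj hj'
    exact le_of_lt hAj
  exact absurd (hvmax i _ hmem) (not_le.mpr hPi)
end

section
/- In every two-sided matching market with strict preferences there exists a proposer-optimal stable match: a stable match μ* such that for every stable match μ' and every proposer P_i, O_{P_i}(μ*_{P_i}) ≥ O_{P_i}(μ'_{P_i}), i.e., every proposer weakly prefers their partner in μ* to their partner in any other stable match. -/
open scoped Classical

noncomputable section AuxGS

namespace AuxGS

variable {P A : Type} [Fintype P] [Fintype A]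

/-- An element of a finite set maximizing `f`. -/
def best {α : Type} (f : α → ℝ) (s : Finset α) (hs : s.Nonempty) : α :=
  (Finset.exists_max_image s f hs).choose

lemma best_mem {α : Type} (f : α → ℝ) (s : Finset α) (hs : s.Nonempty) :
    best f s hs ∈ s :=
  (Finset.exists_max_image s f hs).choose_spec.1

lemma best_max {α : Type} (f : α → ℝ) (s : Finset α) (hs : s.Nonempty) :
    ∀ a ∈ s, f a ≤ f (best f s hs) := fun a ha =>
  (Finset.exists_max_image s f hs).choose_spec.2 a ha

lemma best_eq {α : Type} (f : α → ℝ) (hf : Function.Injective f) (s : Finset α)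
    (hs : s.Nonempty) {a : α} (ha : a ∈ s) (hmax : ∀ b ∈ s, f b ≤ f a) :
    best f s hs = a := by
  apply hf
  exact le_antisymm (hmax _ (best_mem f s hs)) (best_max f s hs a ha)

variable (M : Market P A)

/-- pre-matchings -/
abbrev V (P A : Type) : Type := (P → Option A) × (A → Option P)

def accP (y : A → Option P) (i : P) : Finset (Option A) :=
  Finset.univ.filter (fun o => ∀ j, o = some j → M.OA j (y j) ≤ M.OA j (some i))

def accA (x : P → Option A) (j : A) : Finset (Option P) :=
  Finset.univ.filter (fun o => ∀ i, o = some i → M.OP i (x i) ≤ M.OP i (some j))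

lemma none_mem_accP (y : A → Option P) (i : P) : (none : Option A) ∈ accP M y i := by
  simp [accP]

lemma none_mem_accA (x : P → Option A) (j : A) : (none : Option P) ∈ accA M x j := by
  simp [accA]

lemma mem_accP_iff {y : A → Option P} {i : P} {o : Option A} :
    o ∈ accP M y i ↔ ∀ j, o = some j → M.OA j (y j) ≤ M.OA j (some i) := by
  simp [accP]

lemma mem_accA_iff {x : P → Option A} {j : A} {o : Option P} :
    o ∈ accA M x j ↔ ∀ i, o = some i → M.OP i (x i) ≤ M.OP i (some j) := by
  simp [accA]

def T (v : V P A) : V P A :=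
  (fun i => best (M.OP i) (accP M v.2 i) ⟨none, none_mem_accP M v.2 i⟩,
   fun j => best (M.OA j) (accA M v.1 j) ⟨none, none_mem_accA M v.1 j⟩)

/-- the order on pre-matchings: better for proposers, worse for acceptors -/
def vle (v w : V P A) : Prop :=
  (∀ i, M.OP i (v.1 i) ≤ M.OP i (w.1 i)) ∧ (∀ j, M.OA j (w.2 j) ≤ M.OA j (v.2 j))

lemma vle_refl (v : V P A) : vle M v v := ⟨fun _ => le_rfl, fun _ => le_rfl⟩

lemma vle_trans {u v w : V P A} (h1 : vle M u v) (h2 : vle M v w) : vle M u w :=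
  ⟨fun i => le_trans (h1.1 i) (h2.1 i), fun j => le_trans (h2.2 j) (h1.2 j)⟩

lemma vle_antisymm {v w : V P A} (h1 : vle M v w) (h2 : vle M w v) : v = w := by
  have hP : v.1 = w.1 := funext fun i => M.OP_inj i (le_antisymm (h1.1 i) (h2.1 i))
  have hA : v.2 = w.2 := funext fun j => M.OA_inj j (le_antisymm (h2.2 j) (h1.2 j))
  exact Prod.ext hP hA

lemma OP_nonneg (i : P) (o : Option A) : 0 ≤ M.OP i o := by
  cases o with
  | none => simp [M.OP_none]
  | some j => exact (M.OP_pos i j).le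

lemma OA_nonneg (j : A) (o : Option P) : 0 ≤ M.OA j o := by
  cases o with
  | none => simp [M.OA_none]
  | some i => exact (M.OA_pos j i).le

lemma T_mono {v w : V P A} (h : vle M v w) : vle M (T M v) (T M w) := by
  constructor
  · intro i
    apply best_max (M.OP i) (accP M w.2 i) ⟨none, none_mem_accP M w.2 i⟩
    rw [mem_accP_iff]
    intro j hj
    have := (mem_accP_iff M).mp (best_mem (M.OP i) (accP M v.2 i)
      ⟨none, none_mem_accP M v.2 i⟩) j hj
    exact le_trans (h.2 j) this
  · intro j
    apply best_max (M.OA j) (accA M v.1 j) ⟨none, none_mem_accA M v.1 j⟩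
    rw [mem_accA_iff]
    intro i hi
    have := (mem_accA_iff M).mp (best_mem (M.OA j) (accA M w.1 j)
      ⟨none, none_mem_accA M w.1 j⟩) i hi
    exact le_trans (h.1 i) this

/-- the top pre-matching -/
def topv : V P A :=
  (fun i => best (M.OP i) Finset.univ ⟨none, Finset.mem_univ _⟩, fun _ => none)

lemma le_topv (v : V P A) : vle M v (topv M) := by
  constructor
  · intro i
    exact best_max (M.OP i) Finset.univ ⟨none, Finset.mem_univ _⟩ _ (Finset.mem_univ _)
  · intro j
    simpa [topv, M.OA_none] using OA_nonneg M j (v.2 j)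

def seq (n : ℕ) : V P A := (T M)^[n] (topv M)

lemma seq_succ (n : ℕ) : seq M (n + 1) = T M (seq M n) :=
  Function.iterate_succ_apply' _ _ _

lemma seq_decreasing (n : ℕ) : vle M (seq M (n + 1)) (seq M n) := by
  induction n with
  | zero => exact le_topv M _
  | succ n ih =>
    have h := T_mono M ih
    rwa [← seq_succ, ← seq_succ] at h

lemma seq_le {m n : ℕ} (h : m ≤ n) : vle M (seq M n) (seq M m) := by
  induction n with
  | zero => rw [Nat.le_zero.mp h]; exact vle_refl M _
  | succ n ih =>
    rcases Nat.lt_or_ge m (n + 1) with h' | h'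
    · exact vle_trans M (seq_decreasing M n) (ih (Nat.lt_succ_iff.mp h'))
    · rw [le_antisymm h h']; exact vle_refl M _

/-- every fixed point lies below every term of the iteration -/
lemma fixed_le_seq {w : V P A} (hw : T M w = w) (n : ℕ) : vle M w (seq M n) := by
  induction n with
  | zero => exact le_topv M w
  | succ n ih => rw [seq_succ, ← hw]; exact T_mono M ih

lemma exists_fixed_point : ∃ v : V P A, T M v = v ∧ ∀ w : V P A, T M w = w → vle M w v := by
  obtain ⟨m, n, hmn, heq⟩ := Finite.exists_ne_map_eq_of_infinite (seq M)
  wlog hlt : m < n generalizing m n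
  · exact this n m hmn.symm heq.symm (by omega)
  have hfix : T M (seq M m) = seq M m := by
    rw [← seq_succ]
    apply vle_antisymm M
    · exact seq_decreasing M m
    · rw [heq]; exact seq_le M hlt
  exact ⟨seq M m, hfix, fun w hw => fixed_le_seq M hw m⟩

/-- fixed points are consistent -/
lemma fixed_consistent {v : V P A} (hv : T M v = v) (i : P) (j : A) :
    v.1 i = some j ↔ v.2 j = some i := by
  have hP : v.1 i = best (M.OP i) (accP M v.2 i) ⟨none, none_mem_accP M v.2 i⟩ :=
    (congrFun (congrArg Prod.fst hv) i).symm
  have hA : v.2 j = best (M.OA j) (accA M v.1 j) ⟨none, none_mem_accA M v.1 j⟩ :=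
    (congrFun (congrArg Prod.snd hv) j).symm
  have hPmem : v.1 i ∈ accP M v.2 i := hP ▸ best_mem _ _ _
  have hPmax : ∀ o ∈ accP M v.2 i, M.OP i o ≤ M.OP i (v.1 i) := by
    rw [hP]; exact best_max _ _ _
  have hAmem : v.2 j ∈ accA M v.1 j := hA ▸ best_mem _ _ _
  have hAmax : ∀ o ∈ accA M v.1 j, M.OA j o ≤ M.OA j (v.2 j) := by
    rw [hA]; exact best_max _ _ _
  constructor
  · intro h
    -- i is acceptable to j
    have h1 : M.OA j (v.2 j) ≤ M.OA j (some i) := (mem_accP_iff M).mp hPmem j h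
    have h2 : (some i : Option P) ∈ accA M v.1 j := by
      rw [mem_accA_iff]
      intro i' hi'
      rw [Option.some_inj] at hi'
      subst hi'
      rw [h]
    have h3 : M.OA j (some i) ≤ M.OA j (v.2 j) := hAmax _ h2
    exact (M.OA_inj j (le_antisymm h3 h1)).symm ▸ rfl
  · intro h
    have h1 : M.OP i (v.1 i) ≤ M.OP i (some j) := (mem_accA_iff M).mp hAmem i h
    have h2 : (some j : Option A) ∈ accP M v.2 i := by
      rw [mem_accP_iff]
      intro j' hj'
      rw [Option.some_inj] at hj'
      subst hj'
      rw [h]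
    have h3 : M.OP i (some j) ≤ M.OP i (v.1 i) := hPmax _ h2
    exact (M.OP_inj i (le_antisymm h3 h1)).symm ▸ rfl

/-- fixed points are stable -/
lemma fixed_stable {v : V P A} (hv : T M v = v) :
    ¬ ∃ (i : P) (j : A), M.OP i (some j) > M.OP i (v.1 i) ∧
      M.OA j (some i) > M.OA j (v.2 j) := by
  rintro ⟨i, j, h1, h2⟩
  have hP : v.1 i = best (M.OP i) (accP M v.2 i) ⟨none, none_mem_accP M v.2 i⟩ :=
    (congrFun (congrArg Prod.fst hv) i).symm
  have hmem : (some j : Option A) ∈ accP M v.2 i := by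
    rw [mem_accP_iff]
    intro j' hj'
    rw [Option.some_inj] at hj'
    subst hj'
    exact h2.le
  have : M.OP i (some j) ≤ M.OP i (v.1 i) := by
    rw [hP]; exact best_max _ _ _ _ hmem
  linarith

/-- stable matchings are fixed points -/
lemma stable_fixed (μ : Matching P A) (hμ : Stable M μ) :
    T M (μ.μP, μ.μA) = (μ.μP, μ.μA) := by
  have hP : ∀ i, (T M (μ.μP, μ.μA)).1 i = μ.μP i := by
    intro i
    refine best_eq (M.OP i) (M.OP_inj i) _ ⟨none, none_mem_accP M _ _⟩ ?_ ?_
    · rw [mem_accP_iff]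
      intro j hj
      show M.OA j (μ.μA j) ≤ M.OA j (some i)
      rw [(μ.consistent i j).mp hj]
    · intro o ho
      rw [mem_accP_iff] at ho
      by_contra hc
      push_neg at hc
      cases o with
      | none =>
        have := OP_nonneg M i (μ.μP i)
        rw [M.OP_none] at hc
        linarith
      | some j =>
        have hj : M.OA j (μ.μA j) ≤ M.OA j (some i) := ho j rfl
        rcases eq_or_lt_of_le hj with heq | hlt
        · have : μ.μA j = some i := M.OA_inj j heq
          have : μ.μP i = some j := (μ.consistent i j).mpr this
          rw [this] at hc
          exact absurd rfl (ne_of_gt hc)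
        · exact hμ ⟨i, j, hc, hlt⟩
  have hA : ∀ j, (T M (μ.μP, μ.μA)).2 j = μ.μA j := by
    intro j
    refine best_eq (M.OA j) (M.OA_inj j) _ ⟨none, none_mem_accA M _ _⟩ ?_ ?_
    · rw [mem_accA_iff]
      intro i hi
      show M.OP i (μ.μP i) ≤ M.OP i (some j)
      rw [(μ.consistent i j).mpr hi]
    · intro o ho
      rw [mem_accA_iff] at ho
      by_contra hc
      push_neg at hc
      cases o with
      | none =>
        have := OA_nonneg M j (μ.μA j)
        rw [M.OA_none] at hc
        linarith
      | some i =>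
        have hi : M.OP i (μ.μP i) ≤ M.OP i (some j) := ho i rfl
        rcases eq_or_lt_of_le hi with heq | hlt
        · have : μ.μP i = some j := M.OP_inj i heq
          have : μ.μA j = some i := (μ.consistent i j).mp this
          rw [this] at hc
          exact absurd rfl (ne_of_gt hc)
        · exact hμ ⟨i, j, hlt, hc⟩
  exact Prod.ext (funext hP) (funext hA)

end AuxGS

end AuxGS

/-- Every two-sided matching market with strict preferences admits a
proposer-optimal stable match: a stable match that every proposer weakly
prefers to every other stable match. -/
theorem exists_proposer_optimal_stable_match (P A : Type) [Fintype P] [Fintype A]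
    [Nonempty P] [Nonempty A] (M : Market P A) :
    ∃ μstar : Matching P A, Stable M μstar ∧
      ∀ μ' : Matching P A, Stable M μ' →
        ∀ i : P, M.OP i (μ'.μP i) ≤ M.OP i (μstar.μP i) := by
  obtain ⟨v, hv, hgfp⟩ := AuxGS.exists_fixed_point M
  refine ⟨⟨v.1, v.2, AuxGS.fixed_consistent M hv⟩, AuxGS.fixed_stable M hv, ?_⟩
  intro μ' hμ' i
  exact (hgfp _ (AuxGS.stable_fixed M μ' hμ')).1 i
end

section
/- Every pure-strategy Nash equilibrium of the matching game corresponds to a stable matching: if the action profile a is a Nash equilibrium, then the resulting match μ(a) is a stable match of the market. -/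
set_option linter.unusedSectionVars false
variable {P A : Type} [Fintype P] [Fintype A] [DecidableEq P] [DecidableEq A]

/-- Given an action profile `a`, acceptor `j` accepts its most preferred
proposer among those proposing to it (if any). -/
noncomputable def accept (M : Market P A) (a : P → Option A) (j : A) : Option P :=
  if h : (Finset.univ.filter fun i => a i = some j).Nonempty then
    some (Classical.choose
      ((Finset.univ.filter fun i => a i = some j).exists_max_image
        (fun i => M.OA j (some i)) h))
  else none

theorem accept_spec {M : Market P A} {a : P → Option A} {j : A} {i : P}
    (h : accept M a j = some i) :
    a i = some j ∧ ∀ i', a i' = some j → M.OA j (some i') ≤ M.OA j (some i) := by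
  unfold accept at h
  split_ifs at h with hne
  · obtain ⟨hmem, hmax⟩ := Classical.choose_spec
      ((Finset.univ.filter fun i => a i = some j).exists_max_image
        (fun i => M.OA j (some i)) hne)
    have hi : Classical.choose
        ((Finset.univ.filter fun i => a i = some j).exists_max_image
          (fun i => M.OA j (some i)) hne) = i := Option.some_injective _ h
    rw [hi] at hmem hmax
    refine ⟨by simpa using hmem, fun i' hi' => hmax i' (by simpa using hi')⟩

theorem accept_of_propose {M : Market P A} {a : P → Option A} {j : A} {i : P}
    (h : a i = some j) : ∃ i', accept M a j = some i' := by
  unfold accept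
  have hne : (Finset.univ.filter fun i => a i = some j).Nonempty :=
    ⟨i, by simpa using h⟩
  rw [dif_pos hne]
  exact ⟨_, rfl⟩

/-- The match resulting from an action profile `a`. -/
noncomputable def matchOf (M : Market P A) (a : P → Option A) : Matching P A where
  μP i := (a i).bind fun j => if accept M a j = some i then some j else none
  μA j := accept M a j
  consistent := by
    intro i j
    constructor
    · intro h
      rcases Option.bind_eq_some_iff.mp h with ⟨j', hj', hif⟩
      by_cases hc : accept M a j' = some i
      · rw [if_pos hc] at hif
        exact (Option.some_injective _ hif) ▸ hc
      · rw [if_neg hc] at hif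
        exact absurd hif (by simp)
    · intro h
      have hai : a i = some j := (accept_spec h).1
      show (a i).bind _ = some j
      rw [hai]
      simp [h]

/-- The utility of proposer `i` under action profile `a`. -/
noncomputable def util (M : Market P A) (a : P → Option A) (i : P) : ℝ :=
  M.OP i ((matchOf M a).μP i)

/-- Pure Nash equilibrium: no proposer can strictly increase its utility by a
unilateral deviation. -/
def IsNash (M : Market P A) (a : P → Option A) : Prop :=
  ∀ (i : P) (a' : Option A), util M (Function.update a i a') i ≤ util M a i

theorem OA_le_OA_accept_of_propose {M : Market P A} {a : P → Option A} {j : A} {i : P}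
    (h : a i = some j) : M.OA j (some i) ≤ M.OA j (accept M a j) := by
  obtain ⟨i₀, hi₀⟩ := accept_of_propose (M := M) h
  rw [hi₀]
  exact (accept_spec hi₀).2 i h

/-- Every rival of `i` at `j` already proposed to `j` under `a`, so is worth at most `j`'s current
partner. -/
theorem accept_update_of_lt {M : Market P A} {a : P → Option A} {i : P} {j : A}
    (hlt : M.OA j (accept M a j) < M.OA j (some i)) :
    accept M (Function.update a i (some j)) j = some i := by
  have hprop : Function.update a i (some j) i = some j := Function.update_self ..
  obtain ⟨i', hi'⟩ := accept_of_propose (M := M) hprop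
  obtain ⟨hi'_prop, hi'_max⟩ := accept_spec hi'
  rw [hi']
  by_contra hne
  have hne' : i' ≠ i := fun h => hne (congrArg some h)
  rw [Function.update_of_ne hne'] at hi'_prop
  linarith [hi'_max i hprop, OA_le_OA_accept_of_propose (M := M) hi'_prop]

theorem util_update_of_lt {M : Market P A} {a : P → Option A} {i : P} {j : A}
    (hlt : M.OA j (accept M a j) < M.OA j (some i)) :
    util M (Function.update a i (some j)) i = M.OP i (some j) := by
  rw [util, ((matchOf M _).consistent i j).mpr (accept_update_of_lt hlt)]

theorem nash_implies_stable_general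
    (M : Market P A) (a : P → Option A) (h : IsNash M a) :
    Stable M (matchOf M a) := by
  rintro ⟨i, j, hP, hA⟩
  have hdev := h i (some j)
  rw [util_update_of_lt hA] at hdev
  exact hdev.not_gt hP

/-- Every pure-strategy Nash equilibrium of the matching game produces a stable match. -/
theorem nash_implies_stable [Nonempty P] [Nonempty A]
    (M : Market P A) (a : P → Option A) (h : IsNash M a) :
    Stable M (matchOf M a) :=
  nash_implies_stable_general M a h
end

section
/- Every stable match is realized by some pure-strategy Nash equilibrium of the matching game: if μ is a stable match, then the action profile a defined by a_i = μ_{P_i} when proposer P_i is matched in μ and a_i = ∅ when P_i is unmatched in μ is a Nash equilibrium, and the resulting match satisfies μ(a) = μ. -/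
set_option linter.unusedSectionVars false
variable {P A : Type} [Fintype P] [Fintype A] [DecidableEq P] [DecidableEq A]

/-!
Under the profile `μ.μP` every acceptor receives exactly one proposal, from its `μ`-partner, so
the resulting match is `μ` itself. If proposer `i` deviates and ends up with acceptor
`j ≠ μ.μP i`, then `j` chose `i` over every proposer it received, including its `μ`-partner, who
still proposes to `j`; stability of `μ` then forces `i` to like `j` no better than `μ.μP i`.
-/

theorem Market.OP_nonneg (M : Market P A) (i : P) (o : Option A) : 0 ≤ M.OP i o := by
  cases o with
  | none => exact (M.OP_none i).ge
  | some j => exact (M.OP_pos i j).le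

theorem Matching.ext_μA {μ₁ μ₂ : Matching P A} (h : μ₁.μA = μ₂.μA) : μ₁ = μ₂ := by
  obtain ⟨μP₁, μA₁, consistent₁⟩ := μ₁
  obtain ⟨μP₂, μA₂, consistent₂⟩ := μ₂
  subst h
  have hP : μP₁ = μP₂ := funext fun i => Option.ext fun j =>
    (consistent₁ i j).trans (consistent₂ i j).symm
  subst hP
  rfl

theorem Stable.OP_le_of_OA_lt {M : Market P A} {μ : Matching P A} (h : Stable M μ) {i : P} {j : A}
    (hj : M.OA j (μ.μA j) < M.OA j (some i)) : M.OP i (some j) ≤ M.OP i (μ.μP i) :=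
  not_lt.mp fun hi => h ⟨i, j, hi, hj⟩

theorem accept_μP (M : Market P A) (μ : Matching P A) (j : A) : accept M μ.μP j = μ.μA j := by
  refine Option.ext fun i => ⟨fun hi => (μ.consistent i j).mp (accept_spec hi).1, fun hi => ?_⟩
  obtain ⟨i', hi'⟩ := accept_of_propose (M := M) ((μ.consistent i j).mpr hi)
  have : μ.μA j = some i' := (μ.consistent i' j).mp (accept_spec hi').1
  rwa [← Option.some_injective _ (hi.symm.trans this)] at hi'

theorem matchOf_μP (M : Market P A) (μ : Matching P A) : matchOf M μ.μP = μ :=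
  Matching.ext_μA (funext (accept_μP M μ))

theorem util_μP (M : Market P A) (μ : Matching P A) (i : P) : util M μ.μP i = M.OP i (μ.μP i) := by
  rw [util, matchOf_μP]

theorem OA_partner_lt_of_accept_update (M : Market P A) (μ : Matching P A) {i : P} {j : A}
    {a' : Option A} (hacc : accept M (Function.update μ.μP i a') j = some i)
    (hj : μ.μP i ≠ some j) : M.OA j (μ.μA j) < M.OA j (some i) := by
  cases hA : μ.μA j with
  | none => rw [M.OA_none]; exact M.OA_pos j i
  | some i₀ =>
    have hne : i₀ ≠ i := by
      rintro rfl
      exact hj ((μ.consistent i₀ j).mpr hA)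
    have hprop : Function.update μ.μP i a' i₀ = some j := by
      rw [Function.update_of_ne hne]
      exact (μ.consistent i₀ j).mpr hA
    exact ((accept_spec hacc).2 i₀ hprop).lt_of_ne fun heq =>
      hne (Option.some_injective _ (M.OA_inj j heq))

theorem isNash_of_stable {M : Market P A} {μ : Matching P A} (h : Stable M μ) :
    IsNash M μ.μP := by
  intro i a'
  rw [util_μP, util]
  cases hdev : (matchOf M (Function.update μ.μP i a')).μP i with
  | none => rw [M.OP_none]; exact M.OP_nonneg i _
  | some j =>
    by_cases hj : μ.μP i = some j
    · rw [hj]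
    · have hacc : accept M (Function.update μ.μP i a') j = some i :=
        ((matchOf M _).consistent i j).mp hdev
      exact h.OP_le_of_OA_lt (OA_partner_lt_of_accept_update M μ hacc hj)

theorem stable_implies_nash_general
    (M : Market P A) (μ : Matching P A) (h : Stable M μ) :
    IsNash M μ.μP ∧ matchOf M μ.μP = μ :=
  ⟨isNash_of_stable h, matchOf_μP M μ⟩

/-- Every stable match is realized by a pure-strategy Nash equilibrium: proposing
directly to one's partner (or remaining single if unmatched) is a Nash equilibrium
that reproduces the stable match. -/
theorem stable_implies_nash [Nonempty P] [Nonempty A]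
    (M : Market P A) (μ : Matching P A) (h : Stable M μ) :
    IsNash M μ.μP ∧ matchOf M μ.μP = μ :=
  stable_implies_nash_general M μ h
end

section
/- Any action profile corresponding to the proposer-optimal stable match is a welfare-maximizing Nash equilibrium: if a* is an action profile with μ(a*) = μ* (the proposer-optimal stable match), then a* is a Nash equilibrium, and for every Nash equilibrium action profile a' the welfare satisfies Σ_{i=1}^n u_i(a*) ≥ Σ_{i=1}^n u_i(a'). -/
set_option linter.unusedSectionVars false
variable {P A : Type} [Fintype P] [Fintype A] [DecidableEq P] [DecidableEq A]

section

variable {M : Market P A}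

theorem OA_le_OA_accept {a : P → Option A} {i : P} {j : A} (h : a i = some j) :
    M.OA j (some i) ≤ M.OA j (accept M a j) := by
  obtain ⟨k, hk⟩ := accept_of_propose (M := M) h
  rw [hk]
  exact (accept_spec hk).2 i h

theorem accept_eq_some_of_forall_lt {a : P → Option A} {i : P} {j : A} (h : a i = some j)
    (hbest : ∀ i', i' ≠ i → a i' = some j → M.OA j (some i') < M.OA j (some i)) :
    accept M a j = some i := by
  obtain ⟨k, hk⟩ := accept_of_propose (M := M) h
  rw [hk]
  by_contra hki
  have hlt := hbest k (fun e => hki (e ▸ rfl)) (accept_spec hk).1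
  linarith [(accept_spec hk).2 i h]

theorem matchOf_μP_eq_some_iff {a : P → Option A} {i : P} {j : A} :
    (matchOf M a).μP i = some j ↔ a i = some j ∧ accept M a j = some i :=
  ((matchOf M a).consistent i j).trans ⟨fun h => ⟨(accept_spec h).1, h⟩, And.right⟩

theorem exists_blocking_pair_of_util_lt {a : P → Option A} {i : P} {o : Option A}
    (h : util M a i < util M (Function.update a i o) i) :
    ∃ j, M.OP i (some j) > M.OP i ((matchOf M a).μP i) ∧
      M.OA j (some i) > M.OA j ((matchOf M a).μA j) := by
  set a' := Function.update a i o
  obtain ⟨j, hj⟩ : ∃ j, (matchOf M a').μP i = some j := by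
    cases hm : (matchOf M a').μP i with
    | some j => exact ⟨j, rfl⟩
    | none =>
      rw [util, util, hm, M.OP_none] at h
      exact absurd h (M.OP_nonneg i _).not_gt
  have hacc := (matchOf_μP_eq_some_iff.1 hj).2
  rw [util, util, hj] at h
  refine ⟨j, h, ?_⟩
  show M.OA j (accept M a j) < M.OA j (some i)
  cases h0 : accept M a j with
  | none => simpa [M.OA_none] using M.OA_pos j i
  | some i₀ =>
    have hne : i₀ ≠ i := by
      rintro rfl
      rw [((matchOf M a).consistent i₀ j).2 h0] at h
      exact lt_irrefl _ h
    have ha₀ : a' i₀ = some j := (Function.update_of_ne hne _ _).trans (accept_spec h0).1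
    have hle := OA_le_OA_accept (M := M) ha₀
    rw [hacc] at hle
    exact lt_of_le_of_ne hle fun e => hne (Option.some_injective _ (M.OA_inj j e))

theorem IsNash.stable {a : P → Option A} (hN : IsNash M a) : Stable M (matchOf M a) := by
  rintro ⟨i, j, hOP, hOA⟩
  set a' := Function.update a i (some j)
  have hacc : accept M a' j = some i := by
    refine accept_eq_some_of_forall_lt (Function.update_self ..) fun i' hne hi' => ?_
    exact (OA_le_OA_accept ((Function.update_of_ne hne _ _).symm.trans hi')).trans_lt hOA
  have hdev : util M a' i = M.OP i (some j) := by
    rw [util, matchOf_μP_eq_some_iff.2 ⟨Function.update_self .., hacc⟩]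
  exact (hN i (some j)).not_gt (hdev ▸ hOP)

end

theorem posm_profile_is_welfare_maximizing_nash_general
    (M : Market P A) (μstar : Matching P A)
    (hstable : Stable M μstar)
    (hopt : ∀ μ' : Matching P A, Stable M μ' →
      ∀ i : P, M.OP i (μ'.μP i) ≤ M.OP i (μstar.μP i))
    (astar : P → Option A) (hastar : matchOf M astar = μstar) :
    IsNash M astar ∧
      ∀ a' : P → Option A, IsNash M a' →
        ∑ i : P, util M a' i ≤ ∑ i : P, util M astar i := by
  subst hastar
  refine ⟨fun i o => not_lt.1 fun hlt => ?_,
    fun a' hN => Finset.sum_le_sum fun i _ => hopt _ hN.stable i⟩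
  obtain ⟨j, hblock⟩ := exists_blocking_pair_of_util_lt hlt
  exact hstable ⟨i, j, hblock⟩

/-- Any action profile realizing the proposer-optimal stable match is a
welfare-maximizing Nash equilibrium. -/
theorem posm_profile_is_welfare_maximizing_nash [Nonempty P] [Nonempty A]
    (M : Market P A) (μstar : Matching P A)
    (hstable : Stable M μstar)
    (hopt : ∀ μ' : Matching P A, Stable M μ' →
      ∀ i : P, M.OP i (μ'.μP i) ≤ M.OP i (μstar.μP i))
    (astar : P → Option A) (hastar : matchOf M astar = μstar) :
    IsNash M astar ∧
      ∀ a' : P → Option A, IsNash M a' →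
        ∑ i : P, util M a' i ≤ ∑ i : P, util M astar i :=
  posm_profile_is_welfare_maximizing_nash_general M μstar hstable hopt astar hastar
end

section
/- A proposer who is unmatched in an action profile producing a stable match cannot unilaterally deviate to affect the outcome of any agent, including themselves: if a is an action profile such that the resulting match μ(a) is stable and proposer P_i is unmatched under μ(a), then for every alternative action a_i' ∈ A ∪ {∅}, the action profile (a_i', a_{-i}) obtained by replacing a_i with a_i' satisfies μ((a_i', a_{-i})) = μ(a); in particular P_i remains unmatched. -/
set_option linter.unusedSectionVars false
variable {P A : Type} [Fintype P] [Fintype A] [DecidableEq P] [DecidableEq A]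

/- An unmatched proposer ranks every acceptor above being alone, so stability forces every acceptor
to hold a proposer it strictly prefers to them. Each acceptor then still has that proposer on
offer whatever the deviator does, and nothing the deviator can propose beats it. -/

omit [Fintype P] [Fintype A] [DecidableEq P] [DecidableEq A] in
theorem Matching.eq_of_μA_eq {μ ν : Matching P A} (h : μ.μA = ν.μA) : μ = ν := by
  have hP : μ.μP = ν.μP := by
    funext k
    ext j
    rw [μ.consistent, ν.consistent, h]
  cases μ
  cases ν
  subst hP h
  rfl

omit [DecidableEq P] [DecidableEq A] in
theorem Stable.OA_lt_of_μP_eq_none {M : Market P A} {μ : Matching P A} (hμ : Stable M μ)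
    {i : P} (hi : μ.μP i = none) (j : A) : M.OA j (some i) < M.OA j (μ.μA j) := by
  have hle : M.OA j (some i) ≤ M.OA j (μ.μA j) := by
    by_contra! hlt
    refine hμ ⟨i, j, ?_, hlt⟩
    rw [hi, M.OP_none]
    exact M.OP_pos i j
  have hne : μ.μA j ≠ some i := fun h => by
    simpa [hi] using (μ.consistent i j).mpr h
  exact hle.lt_of_ne fun h => hne (M.OA_inj j h).symm

theorem accept_eq_some_of_forall_le {M : Market P A} {a : P → Option A} {j : A} {i : P}
    (hi : a i = some j) (hmax : ∀ i', a i' = some j → M.OA j (some i') ≤ M.OA j (some i)) :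
    accept M a j = some i := by
  obtain ⟨i₁, h₁⟩ := accept_of_propose (M := M) hi
  obtain ⟨hi₁, hmax₁⟩ := accept_spec h₁
  rw [h₁, M.OA_inj j (le_antisymm (hmax i₁ hi₁) (hmax₁ i hi))]

theorem accept_update_of_OA_lt {M : Market P A} {a : P → Option A} {j : A} {i : P}
    (hlt : M.OA j (some i) < M.OA j (accept M a j)) (b : Option A) :
    accept M (Function.update a i b) j = accept M a j := by
  rcases hacc : accept M a j with _ | i₀
  · rw [hacc, M.OA_none] at hlt
    exact absurd hlt (M.OA_pos j i).not_gt
  rw [hacc] at hlt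
  obtain ⟨hi₀, hmax⟩ := accept_spec hacc
  have hne : i₀ ≠ i := by
    rintro rfl
    exact hlt.false
  refine accept_eq_some_of_forall_le (by rwa [Function.update_of_ne hne]) fun i' hi' => ?_
  by_cases hi'i : i' = i
  · exact hi'i ▸ hlt.le
  · exact hmax i' (by rwa [Function.update_of_ne hi'i] at hi')

theorem unmatched_cannot_affect_general
    (M : Market P A) (a : P → Option A)
    (hstable : Stable M (matchOf M a))
    (i : P) (hunmatched : (matchOf M a).μP i = none) :
    ∀ a' : Option A, matchOf M (Function.update a i a') = matchOf M a := fun b =>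
  Matching.eq_of_μA_eq <| funext fun j =>
    accept_update_of_OA_lt (hstable.OA_lt_of_μP_eq_none hunmatched j) b

/-- An unmatched proposer in an action profile producing a stable match cannot
unilaterally deviate to change the outcome of any agent, including themselves. -/
theorem unmatched_cannot_affect [Nonempty P] [Nonempty A]
    (M : Market P A) (a : P → Option A)
    (hstable : Stable M (matchOf M a))
    (i : P) (hunmatched : (matchOf M a).μP i = none) :
    ∀ a' : Option A, matchOf M (Function.update a i a') = matchOf M a :=
  unmatched_cannot_affect_general M a hstable i hunmatched
end
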